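/- arXiv:math-ph/0309030 — 3 statements merged into one kernel-verified Lean document; each statement's English description precedes it below -/
import Mathlib

section
/- For c ≥ 1, P ≥ 1, any unit vector ω and p ∈ ℝ³ with |p| ≤ P, one has | 1 - [(1 - c^{-1} ω·p̂)² √(1 + c^{-2}p²)]^{-1} | ≤ D c^{-1} P⁵ for a constant D independent of c, P, ω, p. -/
set_option maxHeartbeats 1000000


open scoped RealInnerProductSpace

noncomputable def phat (c : ℝ) (p : EuclideanSpace ℝ (Fin 3)) : EuclideanSpace ℝ (Fin 3) :=
  (Real.sqrt (1 + c⁻¹ ^ 2 * ‖p‖ ^ 2))⁻¹ • p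

lemma kernel_aux (c P n u : ℝ) (hc : 1 ≤ c) (hP : 1 ≤ P) (hn0 : 0 ≤ n) (hnP : n ≤ P)
    (hu : |u| ≤ n) :
    |1 - ((1 - c⁻¹ * ((Real.sqrt (1 + c⁻¹ ^ 2 * n ^ 2))⁻¹ * u)) ^ 2 *
        Real.sqrt (1 + c⁻¹ ^ 2 * n ^ 2))⁻¹| ≤ 100 * c⁻¹ * P ^ 5 := by
  set e := c⁻¹ with he_def
  have he0 : 0 < e := inv_pos.2 (lt_of_lt_of_le one_pos hc)
  have he1 : e ≤ 1 := by
    rw [he_def]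
    exact inv_le_one_of_one_le₀ hc
  have hP0 : (0:ℝ) < P := by linarith
  set x := e * n with hx_def
  have hx0 : 0 ≤ x := mul_nonneg he0.le hn0
  have hxP : x ≤ P := by nlinarith [he1, hn0, hnP, he0.le]
  have harg0 : (0:ℝ) ≤ 1 + e ^ 2 * n ^ 2 := by positivity
  set s := Real.sqrt (1 + e ^ 2 * n ^ 2) with hs_def
  have hs2 : s ^ 2 = 1 + x ^ 2 := by
    rw [hs_def, Real.sq_sqrt harg0, hx_def]; ring
  have hsnn : 0 ≤ s := Real.sqrt_nonneg _
  have hs1 : 1 ≤ s := by nlinarith [hs2, hsnn, sq_nonneg x]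
  have hs0 : 0 < s := lt_of_lt_of_le one_pos hs1
  set t := e * (s⁻¹ * u) with ht_def
  have hts : |t| * s ≤ x := by
    have h : |t| * s = e * |u| := by
      rw [ht_def, abs_mul, abs_mul, abs_of_pos he0, abs_of_pos (inv_pos.2 hs0)]
      field_simp
    rw [h]
    exact mul_le_mul_of_nonneg_left hu he0.le
  have ht : |t| ≤ x := le_trans (le_mul_of_one_le_right (abs_nonneg t) hs1) hts
  have ht2s : t ^ 2 * s ≤ x ^ 2 := by
    have h : t ^ 2 * s = |t| * (|t| * s) := by rw [← sq_abs]; ring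
    rw [h]
    calc |t| * (|t| * s) ≤ x * x :=
          mul_le_mul ht hts (mul_nonneg (abs_nonneg t) hsnn) hx0
      _ = x ^ 2 := by ring
  have hs_sub : s - 1 ≤ x ^ 2 := by nlinarith [hs2, hs1]
  have habs_ts : |t * s| ≤ x := by rw [abs_mul, abs_of_pos hs0]; exact hts
  have hts1 := (abs_le.1 habs_ts).1
  have hts2 := (abs_le.1 habs_ts).2
  set A := (1 - t) ^ 2 * s with hA_def
  have hst : s - x ≤ s * (1 - t) := by nlinarith [hts2]
  have hsx : 0 < s - x := by nlinarith [hs2, hs0, hx0]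
  have h1t : 0 < 1 - t := by nlinarith [hst, hsx, hs0]
  have hA0 : 0 < A := mul_pos (pow_pos h1t 2) hs0
  have hsP : s ≤ 2 * P := by nlinarith [hs2, hx0, hxP, hP, hsnn, sq_nonneg (x - P)]
  have hsx3 : s + x ≤ 3 * P := by linarith
  have hkey : 1 ≤ A * (18 * P ^ 3) := by
    have h2 : (s - x) ^ 2 ≤ (s * (1 - t)) ^ 2 := pow_le_pow_left₀ hsx.le hst 2
    have h9 : (s + x) ^ 2 ≤ (3 * P) ^ 2 := pow_le_pow_left₀ (by linarith) hsx3 2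
    have h3 : s * (s + x) ^ 2 ≤ 18 * P ^ 3 := by
      calc s * (s + x) ^ 2 ≤ (2 * P) * ((3 * P) ^ 2) :=
            mul_le_mul hsP h9 (sq_nonneg _) (by positivity)
        _ = 18 * P ^ 3 := by ring
    have hprod : (s - x) * (s + x) = 1 := by nlinarith [hs2]
    have e1 : (s - x) ^ 2 * (s + x) ^ 2 = 1 := by
      rw [← mul_pow, hprod, one_pow]
    have e2 : (s - x) ^ 2 * (s + x) ^ 2 ≤ (s * (1 - t)) ^ 2 * (s + x) ^ 2 :=
      mul_le_mul_of_nonneg_right h2 (sq_nonneg _)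
    have e3 : (s * (1 - t)) ^ 2 * (s + x) ^ 2 = A * (s * (s + x) ^ 2) := by
      rw [hA_def]; ring
    have e4 : A * (s * (s + x) ^ 2) ≤ A * (18 * P ^ 3) :=
      mul_le_mul_of_nonneg_left h3 hA0.le
    calc (1:ℝ) = (s - x) ^ 2 * (s + x) ^ 2 := e1.symm
      _ ≤ (s * (1 - t)) ^ 2 * (s + x) ^ 2 := e2
      _ = A * (s * (s + x) ^ 2) := e3
      _ ≤ A * (18 * P ^ 3) := e4
  have hx2 : x ^ 2 ≤ e * P ^ 2 := by nlinarith [pow_le_pow_left₀ hn0 hnP 2, he1, he0.le, sq_nonneg n, mul_nonneg he0.le (sq_nonneg n)]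
  have hxeP : x ≤ e * P := by rw [hx_def]; exact mul_le_mul_of_nonneg_left hnP he0.le
  have hePP : e * P ≤ e * P ^ 2 := by nlinarith [he0.le, hP, hP0]
  have ht2nn : 0 ≤ t ^ 2 * s := mul_nonneg (sq_nonneg t) hsnn
  have hup : A - 1 = (s - 1) - 2 * (t * s) + t ^ 2 * s := by rw [hA_def]; ring
  have habs : |A - 1| ≤ 4 * (e * P ^ 2) := by
    rw [abs_le]
    constructor
    · linarith
    · linarith
  have hexpr : (1 : ℝ) - A⁻¹ = (A - 1) / A := by field_simp
  rw [hexpr, abs_div, abs_of_pos hA0, div_le_iff₀ hA0]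
  nlinarith [mul_le_mul_of_nonneg_left hkey (mul_nonneg he0.le (sq_nonneg P)),
    mul_nonneg (mul_nonneg he0.le (pow_nonneg hP0.le 5)) hA0.le]

theorem kernel_estimate_second_order :
    ∃ D : ℝ, 0 < D ∧ ∀ (c P : ℝ), 1 ≤ c → 1 ≤ P →
      ∀ (ω p : EuclideanSpace ℝ (Fin 3)), ‖ω‖ = 1 → ‖p‖ ≤ P →
        |1 - ((1 - c⁻¹ * ⟪ω, phat c p⟫) ^ 2 * Real.sqrt (1 + c⁻¹ ^ 2 * ‖p‖ ^ 2))⁻¹| ≤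
          D * c⁻¹ * P ^ 5 := by
  refine ⟨100, by norm_num, ?_⟩
  intro c P hc hP ω p hω hp
  have hip : ⟪ω, phat c p⟫ = (Real.sqrt (1 + c⁻¹ ^ 2 * ‖p‖ ^ 2))⁻¹ * ⟪ω, p⟫ := by
    unfold phat
    exact real_inner_smul_right ω p _
  rw [hip]
  have hcs : |⟪ω, p⟫| ≤ ‖p‖ := by
    calc |⟪ω, p⟫| ≤ ‖ω‖ * ‖p‖ := abs_real_inner_le_norm ω p
      _ = ‖p‖ := by rw [hω, one_mul]
  exact kernel_aux c P ‖p‖ ⟪ω, p⟫ hc hP (norm_nonneg p) hp hcs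
end

section
/- Suppose a continuous nondecreasing function 𝒫 : [0,∞) → [1,∞) with 𝒫(0) = P₀ satisfies the integral inequality 𝒫(t) ≤ A + A∫₀ᵗ (1+τ) 𝒫(τ)^{10} e^{4Dτ} exp( 𝒫(τ)⁹ (1+τ)² e^{4Dτ} ) dτ for constants A, D > 0. Then there exists T > 0 depending only on A, D, P₀ (not on the particular function 𝒫) and a constant C = C(A,D,P₀,T) such that 𝒫(t) ≤ C for all t ∈ [0, T) for which the inequality holds. -/
open MeasureTheory

/-- nonlinear Gronwall argument giving a time of existence
independent of the speed of light. -/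
theorem nonlinear_gronwall_uniform_time (A D P₀ : ℝ) (hA : 0 < A) (hD : 0 < D)
    (hP₀ : 1 ≤ P₀) :
    ∃ T : ℝ, 0 < T ∧ ∃ C : ℝ,
      ∀ Pf : ℝ → ℝ, ContinuousOn Pf (Set.Ici 0) → MonotoneOn Pf (Set.Ici 0) →
        (∀ t ∈ Set.Ici (0:ℝ), 1 ≤ Pf t) → Pf 0 = P₀ →
        (∀ t ∈ Set.Ici (0:ℝ),
          Pf t ≤ A + A * ∫ τ in (0:ℝ)..t,
            (1 + τ) * Pf τ ^ 10 * Real.exp (4 * D * τ) *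
              Real.exp (Pf τ ^ 9 * (1 + τ) ^ 2 * Real.exp (4 * D * τ))) →
        ∀ t ∈ Set.Ico 0 T, Pf t ≤ C := by
  set K : ℝ := 2 * (2*A)^10 * Real.exp (4*D) *
      Real.exp ((2*A)^9 * 4 * Real.exp (4*D)) with hKdef
  have hKpos : 0 < K := by positivity
  refine ⟨min 1 (1/(2*A*K)), lt_min one_pos (by positivity), 2*A, ?_⟩
  intro Pf hcont hmono hge1 hP0 hineq t ht
  by_contra hcon
  push_neg at hcon
  obtain ⟨h0t, htT⟩ := ht
  have htlt1 : t < 1 := lt_of_lt_of_le htT (min_le_left _ _)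
  have htlt2 : t < 1/(2*A*K) := lt_of_lt_of_le htT (min_le_right _ _)
  -- From the inequality at t = 0, Pf 0 ≤ A, hence 1 ≤ A.
  have hA1 : 1 ≤ A := by
    have h0 := hineq 0 (Set.mem_Ici.mpr le_rfl)
    simp only [intervalIntegral.integral_same, mul_zero, add_zero] at h0
    have := hge1 0 (Set.mem_Ici.mpr le_rfl)
    linarith
  have hPf0leA : Pf 0 ≤ A := by
    have h0 := hineq 0 (Set.mem_Ici.mpr le_rfl)
    simp only [intervalIntegral.integral_same, mul_zero, add_zero] at h0
    exact h0
  -- By IVT, there is t₁ ∈ [0, t] with Pf t₁ = 2A.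
  have hc2 : ContinuousOn Pf (Set.Icc 0 t) := hcont.mono Set.Icc_subset_Ici_self
  have hmem : 2*A ∈ Set.Icc (Pf 0) (Pf t) := ⟨by linarith, le_of_lt hcon⟩
  obtain ⟨t₁, ht₁mem, ht₁⟩ := intermediate_value_Icc h0t hc2 hmem
  obtain ⟨h0t₁, ht₁t⟩ := ht₁mem
  have ht₁1 : t₁ < 1 := lt_of_le_of_lt ht₁t htlt1
  -- Pointwise bound on the integrand over [0, t₁].
  have hbound : ∀ τ ∈ Set.Icc (0:ℝ) t₁,
      (1 + τ) * Pf τ ^ 10 * Real.exp (4 * D * τ) *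
        Real.exp (Pf τ ^ 9 * (1 + τ) ^ 2 * Real.exp (4 * D * τ)) ≤ K := by
    intro τ hτ
    obtain ⟨hτ0, hτt₁⟩ := hτ
    have hPfτ : Pf τ ≤ 2*A := ht₁ ▸ hmono (Set.mem_Ici.mpr hτ0)
      (Set.mem_Ici.mpr (le_trans hτ0 hτt₁)) hτt₁
    have hPfτ0 : 0 ≤ Pf τ := le_trans zero_le_one (hge1 τ (Set.mem_Ici.mpr hτ0))
    have hτ1 : τ ≤ 1 := le_of_lt (lt_of_le_of_lt hτt₁ ht₁1)
    have h1τ : 1 + τ ≤ 2 := by linarith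
    have hexp1 : Real.exp (4*D*τ) ≤ Real.exp (4*D) := by
      apply Real.exp_le_exp.mpr; nlinarith
    have hsq : (1 + τ)^2 ≤ 4 := by nlinarith
    have hexp2 : Real.exp (Pf τ ^ 9 * (1 + τ) ^ 2 * Real.exp (4 * D * τ)) ≤
        Real.exp ((2*A)^9 * 4 * Real.exp (4*D)) := by
      apply Real.exp_le_exp.mpr
      have h9 : Pf τ ^ 9 ≤ (2*A)^9 := pow_le_pow_left₀ hPfτ0 hPfτ 9
      have h92 : Pf τ ^ 9 * (1 + τ) ^ 2 ≤ (2*A)^9 * 4 :=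
        mul_le_mul h9 hsq (by positivity) (by positivity)
      exact mul_le_mul h92 hexp1 (Real.exp_pos _).le (by positivity)
    rw [hKdef]
    have h10 : Pf τ ^ 10 ≤ (2*A)^10 := pow_le_pow_left₀ hPfτ0 hPfτ 10
    have step1 : (1 + τ) * Pf τ ^ 10 ≤ 2 * (2*A)^10 :=
      mul_le_mul h1τ h10 (by positivity) (by norm_num)
    have step2 : (1 + τ) * Pf τ ^ 10 * Real.exp (4 * D * τ) ≤
        2 * (2*A)^10 * Real.exp (4*D) :=
      mul_le_mul step1 hexp1 (Real.exp_pos _).le (by positivity)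
    exact mul_le_mul step2 hexp2 (Real.exp_pos _).le (by positivity)
  -- Integrability of the integrand on [0, t₁].
  have hcPf : ContinuousOn Pf (Set.Icc 0 t₁) :=
    hcont.mono (Set.Icc_subset_Ici_self)
  have hcf : ContinuousOn (fun τ => (1 + τ) * Pf τ ^ 10 * Real.exp (4 * D * τ) *
      Real.exp (Pf τ ^ 9 * (1 + τ) ^ 2 * Real.exp (4 * D * τ))) (Set.Icc 0 t₁) := by
    apply ContinuousOn.mul
    apply ContinuousOn.mul
    apply ContinuousOn.mul
    · exact (continuous_const.add continuous_id).continuousOn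
    · exact hcPf.pow 10
    · exact (Real.continuous_exp.comp (continuous_const.mul continuous_id)).continuousOn
    · apply Real.continuous_exp.comp_continuousOn
      apply ContinuousOn.mul
      apply ContinuousOn.mul
      · exact hcPf.pow 9
      · exact ((continuous_const.add continuous_id).pow 2).continuousOn
      · exact (Real.continuous_exp.comp (continuous_const.mul continuous_id)).continuousOn
  have hintf : IntervalIntegrable (fun τ => (1 + τ) * Pf τ ^ 10 * Real.exp (4 * D * τ) *
      Real.exp (Pf τ ^ 9 * (1 + τ) ^ 2 * Real.exp (4 * D * τ)))
      MeasureTheory.volume 0 t₁ := by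
    apply ContinuousOn.intervalIntegrable
    rwa [Set.uIcc_of_le h0t₁]
  -- Bound the integral.
  have hintle : (∫ τ in (0:ℝ)..t₁,
      (1 + τ) * Pf τ ^ 10 * Real.exp (4 * D * τ) *
        Real.exp (Pf τ ^ 9 * (1 + τ) ^ 2 * Real.exp (4 * D * τ))) ≤ t₁ * K := by
    have h := intervalIntegral.integral_mono_on h0t₁ hintf
      (intervalIntegrable_const (c := K)) hbound
    rwa [intervalIntegral.integral_const, sub_zero, smul_eq_mul] at h
  have ht₁K : t₁ * K ≤ 1/(2*A) := by
    have h1 : t₁ ≤ 1/(2*A*K) := le_trans ht₁t (le_of_lt htlt2)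
    have h2 : t₁ * K ≤ (1/(2*A*K)) * K := mul_le_mul_of_nonneg_right h1 hKpos.le
    have h3 : (1/(2*A*K)) * K = 1/(2*A) := by
      field_simp
    linarith
  have hfinal := hineq t₁ (Set.mem_Ici.mpr h0t₁)
  have : Pf t₁ ≤ A + A * (1/(2*A)) := by
    have hmul : A * (∫ τ in (0:ℝ)..t₁,
        (1 + τ) * Pf τ ^ 10 * Real.exp (4 * D * τ) *
          Real.exp (Pf τ ^ 9 * (1 + τ) ^ 2 * Real.exp (4 * D * τ))) ≤ A * (1/(2*A)) :=
      mul_le_mul_of_nonneg_left (le_trans hintle ht₁K) hA.le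
    linarith
  have hAhalf : A * (1/(2*A)) = 1/2 := by field_simp
  rw [ht₁, hAhalf] at this
  linarith
end

section
/- Let ∂_t f_∞ be bounded on [0,T']×ℝ⁶, let f, f_∞ vanish for |p| > P or |y| > R + Pt (t ∈ [0,T']), and set D_F(t) = sup_{0≤τ≤t, x, p} |f(τ,x,p) - f_∞(τ,x,p)|. Then for all x ∈ ℝ³, t ∈ [0,T'] and c ≥ 1: ∫∫ | f(max{0, t - c^{-1}|y-x|}, y, p) - f_∞(t, y, p) | dp dy/|y-x| ≤ C ( D_F(t) + c^{-1} ) with C depending only on R, P, T', ‖∂_t f_∞‖_∞ (not on c, t, x). -/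
/-!
Split `f(s, y, p) - f_∞(t, y, p)` at `f_∞(s, y, p)`: the first difference is at most `D_F(t)`,
the second at most `M (t - s) ≤ M c⁻¹ |y - x|` by the mean value theorem. Integrating over the
momentum ball `B_P` bounds the inner integral by `(D_F(t) + M c⁻¹ |y - x|) |B_P|`, so after
division by `|y - x|` the `c⁻¹` term is bounded, while the `D_F(t)` term carries the kernel
`|y - x|⁻¹`. That kernel is locally integrable in dimension three, and its integral over the
spatial support `B_{R + P T'}` is bounded uniformly in `x` by its integral over the unit ball
plus `|B_{R + P T'}|`.
-/

open MeasureTheory Metric Set Module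

section Kernel

theorem inv_norm_le_indicator_closedBall_add_one {E : Type*} [SeminormedAddCommGroup E] (z : E) :
    ‖z‖⁻¹ ≤ (closedBall (0 : E) 1).indicator (fun z => ‖z‖⁻¹) z + 1 := by
  by_cases hz : ‖z‖ ≤ 1
  · rw [indicator_of_mem (mem_closedBall_zero_iff.2 hz)]
    linarith
  · rw [indicator_of_notMem (by simpa using hz), zero_add]
    exact inv_le_one_of_one_le₀ (le_of_not_ge hz)

variable {E : Type*} [NormedAddCommGroup E] [NormedSpace ℝ E] [FiniteDimensional ℝ E]
  [MeasurableSpace E] [BorelSpace E] {μ : Measure E} [μ.IsAddHaarMeasure]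

theorem locallyIntegrable_inv_norm (hd : 1 < finrank ℝ E) :
    LocallyIntegrable (fun z : E => ‖z‖⁻¹) μ :=
  locallyIntegrable_of_norm_le_rpow hd.le (C := 1) (α := 1) (by exact_mod_cast hd)
    (.of_forall fun z => by simp [Real.rpow_neg_one])
    (measurable_norm.inv.aestronglyMeasurable)

theorem integrable_indicator_closedBall_inv_norm (hd : 1 < finrank ℝ E) (r : ℝ) :
    Integrable ((closedBall (0 : E) r).indicator fun z => ‖z‖⁻¹) μ :=
  (integrable_indicator_iff measurableSet_closedBall).2
    ((locallyIntegrable_inv_norm hd).integrableOn_isCompact (isCompact_closedBall 0 r))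

theorem integrableOn_inv_dist (hd : 1 < finrank ℝ E) {K : Set E} (hK : μ K ≠ ⊤) (x : E) :
    IntegrableOn (fun y => (dist y x)⁻¹) K μ := by
  refine Integrable.mono' (((integrable_indicator_closedBall_inv_norm hd 1).comp_sub_right
    x).integrableOn.add (integrableOn_const hK (C := (1 : ℝ))))
    ((measurable_id.dist measurable_const).inv.aestronglyMeasurable) (.of_forall fun y => ?_)
  rw [Real.norm_of_nonneg (inv_nonneg.2 dist_nonneg), dist_eq_norm]
  exact inv_norm_le_indicator_closedBall_add_one (y - x)

theorem setIntegral_inv_dist_le (hd : 1 < finrank ℝ E) {K : Set E} (hK : μ K ≠ ⊤) (x : E) :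
    ∫ y in K, (dist y x)⁻¹ ∂μ ≤ (∫ z in closedBall (0 : E) 1, ‖z‖⁻¹ ∂μ) + μ.real K := by
  set ψ := (closedBall (0 : E) 1).indicator fun z => ‖z‖⁻¹
  have hψ : Integrable ψ μ := integrable_indicator_closedBall_inv_norm hd 1
  have hψ0 : ∀ z, 0 ≤ ψ z := indicator_nonneg fun z _ => inv_nonneg.2 (norm_nonneg z)
  calc ∫ y in K, (dist y x)⁻¹ ∂μ ≤ ∫ y in K, (ψ (y - x) + 1) ∂μ := by
        refine setIntegral_mono (integrableOn_inv_dist hd hK x)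
          ((hψ.comp_sub_right x).integrableOn.add (integrableOn_const hK (C := (1 : ℝ)))) fun y => ?_
        rw [dist_eq_norm]
        exact inv_norm_le_indicator_closedBall_add_one (y - x)
    _ = ∫ y in K, ψ (y - x) ∂μ + μ.real K := by
        rw [integral_add (hψ.comp_sub_right x).integrableOn (integrableOn_const hK),
          setIntegral_const, smul_eq_mul, mul_one]
    _ ≤ ∫ y, ψ (y - x) ∂μ + μ.real K := by
        gcongr ?_ + _
        exact setIntegral_le_integral (hψ.comp_sub_right x) (.of_forall fun y => hψ0 _)
    _ = (∫ z in closedBall (0 : E) 1, ‖z‖⁻¹ ∂μ) + μ.real K := by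
        rw [integral_sub_right_eq_self ψ x, integral_indicator measurableSet_closedBall]

theorem integral_div_dist_le (hd : 1 < finrank ℝ E) {G : E → ℝ} {K : Set E} (hK : μ K ≠ ⊤)
    (x : E) {a b : ℝ} (ha : 0 ≤ a) (hb : 0 ≤ b) (hG0 : ∀ y, 0 ≤ G y)
    (hzero : ∀ y ∉ K, G y = 0) (hG : ∀ y, G y ≤ a + b * dist y x) :
    ∫ y, G y / dist y x ∂μ ≤ a * ((∫ z in closedBall (0 : E) 1, ‖z‖⁻¹ ∂μ) + μ.real K) +
      b * μ.real K := by
  have hinv := integrableOn_inv_dist hd hK x (μ := μ)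
  have hpt : ∀ y, G y / dist y x ≤ a * (dist y x)⁻¹ + b := by
    intro y
    rcases (dist_nonneg : 0 ≤ dist y x).eq_or_lt with h | h
    · simp [← h, hb]
    · rw [div_le_iff₀ h, add_mul, mul_assoc, inv_mul_cancel₀ h.ne', mul_one]
      exact hG y
  calc ∫ y, G y / dist y x ∂μ = ∫ y in K, G y / dist y x ∂μ :=
        (setIntegral_eq_integral_of_forall_compl_eq_zero fun y hy => by simp [hzero y hy]).symm
    _ ≤ ∫ y in K, (a * (dist y x)⁻¹ + b) ∂μ :=
        integral_mono_of_nonneg (.of_forall fun y => div_nonneg (hG0 y) dist_nonneg)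
          ((hinv.const_mul a).add (integrableOn_const hK))
          (.of_forall hpt)
    _ = a * ∫ y in K, (dist y x)⁻¹ ∂μ + b * μ.real K := by
        rw [integral_add (hinv.const_mul a) (integrableOn_const hK), integral_const_mul,
          setIntegral_const, smul_eq_mul, mul_comm _ b]
    _ ≤ _ := by gcongr; exact setIntegral_inv_dist_le hd hK x

end Kernel

theorem abs_sub_le_add_mul_of_hasDerivAt {u v : ℝ → ℝ} {a b D M s t : ℝ}
    (huv : |u s - v s| ≤ D) (hv : ∀ τ ∈ Icc a b, ∃ d, HasDerivAt v d τ ∧ |d| ≤ M)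
    (hs : s ∈ Icc a b) (ht : t ∈ Icc a b) : |u s - v t| ≤ D + M * |t - s| := by
  choose! v' hv' hM using hv
  have hmvt : |v t - v s| ≤ M * |t - s| :=
    (convex_Icc a b).norm_image_sub_le_of_norm_hasDerivWithin_le
      (fun τ hτ => (hv' τ hτ).hasDerivWithinAt) hM hs ht
  calc |u s - v t| ≤ |u s - v s| + |v t - v s| := by
        rw [abs_sub_comm (v t)]; exact abs_sub_le _ _ _
    _ ≤ D + M * |t - s| := add_le_add huv hmvt

theorem integral_le_mul_measureReal_of_forall_compl_eq_zero {α : Type*} [MeasurableSpace α]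
    {μ : Measure α} {g : α → ℝ} {s : Set α} {K : ℝ} (hs : μ s < ⊤)
    (hzero : ∀ x ∉ s, g x = 0) (hK : ∀ x ∈ s, |g x| ≤ K) : ∫ x, g x ∂μ ≤ K * μ.real s := by
  rw [← setIntegral_eq_integral_of_forall_compl_eq_zero hzero]
  exact (Real.le_norm_self _).trans (norm_setIntegral_le_of_norm_le_const hs hK)

theorem integral_abs_sub_le_of_hasDerivAt {α : Type*} [MeasurableSpace α] {μ : Measure α}
    {u v : ℝ → α → ℝ} {B : Set α} {a b D M s t : ℝ} (hB : μ B < ⊤) (hs : s ∈ Icc a b)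
    (ht : t ∈ Icc a b) (hzero : ∀ p ∉ B, u s p = 0 ∧ v t p = 0)
    (hv : ∀ p, ∀ τ ∈ Icc a b, ∃ d, HasDerivAt (fun τ => v τ p) d τ ∧ |d| ≤ M)
    (huv : ∀ p, |u s p - v s p| ≤ D) :
    ∫ p, |u s p - v t p| ∂μ ≤ (D + M * |t - s|) * μ.real B :=
  integral_le_mul_measureReal_of_forall_compl_eq_zero hB
    (fun p hp => by simp [(hzero p hp).1, (hzero p hp).2])
    (fun p _ => by
      rw [abs_abs]
      exact abs_sub_le_add_mul_of_hasDerivAt (u := fun τ => u τ p) (huv p) (hv p) hs ht)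

theorem max_zero_sub_mem_Icc {t δ : ℝ} (ht : 0 ≤ t) (hδ : 0 ≤ δ) :
    max 0 (t - δ) ∈ Icc 0 t ∧ |t - max 0 (t - δ)| ≤ δ := by
  have hmem : max 0 (t - δ) ∈ Icc 0 t := ⟨le_max_left _ _, max_le ht (by linarith)⟩
  refine ⟨hmem, ?_⟩
  rw [abs_of_nonneg (sub_nonneg.2 hmem.2)]
  linarith [le_max_right 0 (t - δ)]

theorem retardation_estimate_general (R P T' M : ℝ) (hP : 0 ≤ P)
    (hM : 0 ≤ M) :
    ∃ C : ℝ, ∀ (f finf : ℝ → EuclideanSpace ℝ (Fin 3) → EuclideanSpace ℝ (Fin 3) → ℝ)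
      (DF : ℝ → ℝ) (c t : ℝ) (x : EuclideanSpace ℝ (Fin 3)),
      1 ≤ c → t ∈ Set.Icc 0 T' →
      -- `f` and `f_∞` vanish for large momenta or outside the light cone
      (∀ s ∈ Set.Icc 0 T', ∀ (y p : EuclideanSpace ℝ (Fin 3)),
        P < ‖p‖ ∨ R + P * s < ‖y‖ → f s y p = 0 ∧ finf s y p = 0) →
      -- `f_∞` is differentiable in time with bounded derivative
      (∀ (y p : EuclideanSpace ℝ (Fin 3)), ∀ s ∈ Set.Icc 0 T',
        ∃ d : ℝ, HasDerivAt (fun τ => finf τ y p) d s ∧ |d| ≤ M) →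
      -- `DF t` bounds the uniform distance of `f` and `f_∞` up to time `t`
      (∀ τ ∈ Set.Icc 0 t, ∀ y p, |f τ y p - finf τ y p| ≤ DF t) →
      (∫ y : EuclideanSpace ℝ (Fin 3),
          (∫ p : EuclideanSpace ℝ (Fin 3),
            |f (max 0 (t - c⁻¹ * dist y x)) y p - finf t y p|) / dist y x) ≤
        C * (DF t + c⁻¹) := by
  set R₀ := R + P * T'
  set V := volume.real (closedBall (0 : EuclideanSpace ℝ (Fin 3)) P)
  set W := volume.real (closedBall (0 : EuclideanSpace ℝ (Fin 3)) R₀)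
  set J := ∫ z in closedBall (0 : EuclideanSpace ℝ (Fin 3)) 1, ‖z‖⁻¹
  refine ⟨V * (J + W) + M * V * W, fun f finf DF c t x hc ht hvanish hderiv hDF => ?_⟩
  have hc0 : 0 ≤ c⁻¹ := inv_nonneg.2 (by linarith)
  have hDF0 : 0 ≤ DF t := (abs_nonneg _).trans (hDF t ⟨ht.1, le_rfl⟩ x x)
  have hV : 0 ≤ V := measureReal_nonneg
  have hW : 0 ≤ W := measureReal_nonneg
  have hJ : 0 ≤ J := setIntegral_nonneg measurableSet_closedBall fun z _ => by positivity
  have hout : ∀ y p, P < ‖p‖ ∨ R₀ < ‖y‖ → ∀ s ∈ Icc 0 T', f s y p = 0 ∧ finf s y p = 0 :=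
    fun y p hyp s hs => hvanish s hs y p (hyp.imp_right fun h => by nlinarith [hs.2])
  have hret := fun y => max_zero_sub_mem_Icc (δ := c⁻¹ * dist y x) ht.1
    (mul_nonneg hc0 dist_nonneg)
  have hret' := fun y => Icc_subset_Icc_right ht.2 (hret y).1
  have hinner : ∀ y, ∫ p, |f (max 0 (t - c⁻¹ * dist y x)) y p - finf t y p| ≤
      DF t * V + M * c⁻¹ * V * dist y x := fun y => by
    refine (integral_abs_sub_le_of_hasDerivAt (u := fun τ => f τ y)
      (measure_closedBall_lt_top (x := 0) (r := P)) (hret' y) ht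
      (fun p hp => ?_) (hderiv y) (hDF _ (hret y).1 y)).trans ?_
    · have hp : P < ‖p‖ := by simpa using hp
      exact ⟨(hout y p (.inl hp) _ (hret' y)).1, (hout y p (.inl hp) t ht).2⟩
    · calc _ ≤ (DF t + M * (c⁻¹ * dist y x)) * V := by gcongr; exact (hret y).2
        _ = _ := by ring
  have hsupp : ∀ y ∉ closedBall (0 : EuclideanSpace ℝ (Fin 3)) R₀,
      ∫ p, |f (max 0 (t - c⁻¹ * dist y x)) y p - finf t y p| = 0 := fun y hy => by
    have hy : R₀ < ‖y‖ := by simpa using hy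
    simp [(hout y _ (.inr hy) _ (hret' y)).1, (hout y _ (.inr hy) t ht).2]
  calc _ ≤ DF t * V * (J + W) + M * c⁻¹ * V * W :=
        integral_div_dist_le (by simp) measure_closedBall_lt_top.ne x (by positivity)
          (by positivity) (fun y => integral_nonneg fun p => abs_nonneg _) hsupp hinner
    _ ≤ (V * (J + W) + M * V * W) * (DF t + c⁻¹) := by
        nlinarith [mul_nonneg (mul_nonneg hV (add_nonneg hJ hW)) hc0,
          mul_nonneg (mul_nonneg (mul_nonneg hM hV) hW) hDF0]

/-- the key retardation estimate in the non-relativistic limit. -/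
theorem retardation_estimate (R P T' M : ℝ) (hR : 0 ≤ R) (hP : 0 ≤ P) (hT' : 0 ≤ T')
    (hM : 0 ≤ M) :
    ∃ C : ℝ, ∀ (f finf : ℝ → EuclideanSpace ℝ (Fin 3) → EuclideanSpace ℝ (Fin 3) → ℝ)
      (DF : ℝ → ℝ) (c t : ℝ) (x : EuclideanSpace ℝ (Fin 3)),
      1 ≤ c → t ∈ Set.Icc 0 T' →
      -- `f` and `f_∞` vanish for large momenta or outside the light cone
      (∀ s ∈ Set.Icc 0 T', ∀ (y p : EuclideanSpace ℝ (Fin 3)),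
        P < ‖p‖ ∨ R + P * s < ‖y‖ → f s y p = 0 ∧ finf s y p = 0) →
      -- `f_∞` is differentiable in time with bounded derivative
      (∀ (y p : EuclideanSpace ℝ (Fin 3)), ∀ s ∈ Set.Icc 0 T',
        ∃ d : ℝ, HasDerivAt (fun τ => finf τ y p) d s ∧ |d| ≤ M) →
      -- `DF t` bounds the uniform distance of `f` and `f_∞` up to time `t`
      (∀ τ ∈ Set.Icc 0 t, ∀ y p, |f τ y p - finf τ y p| ≤ DF t) →
      (∫ y : EuclideanSpace ℝ (Fin 3),
          (∫ p : EuclideanSpace ℝ (Fin 3),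
            |f (max 0 (t - c⁻¹ * dist y x)) y p - finf t y p|) / dist y x) ≤
        C * (DF t + c⁻¹) :=
  retardation_estimate_general R P T' M hP hM
end
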